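/- Let k≥1 be an integer and suppose |a_l|≤1 for l=1,…,2k−1. If u₁ and u₂ are both solutions with data p at infinity, then u₁ = u₂. -/

import Mathlib

noncomputable section

open Complex MeasureTheory Metric

/-- The function `u_s = r^s · cos(s·θ)` in polar coordinates, where `r = |z|` and
`θ = arg z ∈ (−π, π]`.  (It takes the value `0` at the origin.) -/
def us (s : ℝ) (z : ℂ) : ℝ := ‖z‖ ^ s * Real.cos (s * Complex.arg z)

/-- The average of `u` over the circle `∂B_ρ(y)`. -/
def circAvg (u : ℂ → ℝ) (y : ℂ) (ρ : ℝ) : ℝ :=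
  (2 * Real.pi)⁻¹ * ∫ t in (0:ℝ)..(2 * Real.pi), u (y + (ρ : ℂ) * Complex.exp ((t : ℂ) * Complex.I))

/-- Mean-value characterization of harmonicity of a continuous function on a set `A`:
the value at a point equals the average over every circle whose closed disc lies in `A`. -/
def IsHarmOn (u : ℂ → ℝ) (A : Set ℂ) : Prop :=
  ContinuousOn u A ∧
    ∀ y : ℂ, ∀ ρ : ℝ, 0 < ρ → closedBall y ρ ⊆ A → circAvg u y ρ = u y

/-- The slit `S = {(x₁, 0) : x₁ ≤ 0}`. -/
def Slit : Set ℂ := {z : ℂ | z.im = 0 ∧ z.re ≤ 0}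

/-- A solution to the thin obstacle problem in `Ω`: continuous, even in `x₂`,
superharmonic (mean-value form), nonnegative on `{x₂ = 0}`, and harmonic away from
the contact set `{(x₁,0) : u(x₁,0) = 0}`. -/
def IsTOS (u : ℂ → ℝ) (Ω : Set ℂ) : Prop :=
  ContinuousOn u Ω ∧
    (∀ z ∈ Ω, (starRingEnd ℂ) z ∈ Ω → u ((starRingEnd ℂ) z) = u z) ∧
    (∀ y : ℂ, ∀ ρ : ℝ, 0 < ρ → closedBall y ρ ⊆ Ω → circAvg u y ρ ≤ u y) ∧
    (∀ z ∈ Ω, z.im = 0 → 0 ≤ u z) ∧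
    IsHarmOn u (Ω \ {z : ℂ | z.im = 0 ∧ u z = 0})

/-- A solution to the thin obstacle problem in all of `ℝ²`: a solution in `B_R` for all `R > 0`. -/
def IsTOSR2 (u : ℂ → ℝ) : Prop := ∀ R : ℝ, 0 < R → IsTOS u (ball 0 R)

/-- The data `p = u_{2k−1/2} + Σ_{l=1}^{2k−1} a_l · u_{2k−1/2−l}`. -/
def pData (k : ℕ) (a : ℕ → ℝ) (z : ℂ) : ℝ :=
  us (2 * (k:ℝ) - 1/2) z +
    ∑ l ∈ Finset.Icc 1 (2*k-1), a l * us (2 * (k:ℝ) - 1/2 - (l:ℝ)) z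

/-- `u` is a solution to the thin obstacle problem in `ℝ²` with data `p` at infinity. -/
def SolWithData (u p : ℂ → ℝ) : Prop :=
  IsTOSR2 u ∧ ∃ C : ℝ, ∀ z : ℂ, |u z - p z| ≤ C

/-!
The positive part `m = (u₁ - u₂)⁺` is continuous, bounded, and satisfies the sub-mean-value
inequality on small circles everywhere: where `u₁ > u₂ ≥ 0` on the axis, `u₁` is off its contact
set and hence harmonic there, while `u₂` is superharmonic. A Liouville theorem for such functions
(maximum principle for `m - ε log |z|` on annuli `1 < |z| < R`, then `ε → 0`, then the strong
maximum principle) makes `m` constant. A positive constant is impossible: `u₁` would then have no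
contact points, so it would be harmonic and its circle averages about `0` would stay at `u₁ 0`,
whereas the circle averages of `p` are `-ρ^{s₀}/(π s₀) + O(ρ^{s₀ - 1})` with `s₀ = 2k - 1/2`
(because `sin (s₀ π) = -1` and `|a_l| ≤ 1`), which tends to `-∞`. Hence `u₁ ≤ u₂`, and by
symmetry `u₁ = u₂`.
-/

open Real Filter Topology Set

theorem circAvg_eq_circleAverage (u : ℂ → ℝ) (y : ℂ) (ρ : ℝ) :
    circAvg u y ρ = circleAverage u y ρ := rfl

theorem eqOn_sphere_of_le_circleAverage {f : ℂ → ℝ} {c : ℂ} {R a : ℝ} (hR : 0 < R)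
    (hf : ContinuousOn f (sphere c R)) (hle : ∀ z ∈ sphere c R, f z ≤ a)
    (havg : a ≤ circleAverage f c R) : EqOn f (fun _ ↦ a) (sphere c R) := by
  intro z hz
  by_contra hne
  have hmaps : MapsTo (circleMap c R) (Icc 0 (2 * π)) (sphere c R) := fun θ _ ↦
    circleMap_mem_sphere c hR.le θ
  have hcont : ContinuousOn (fun θ ↦ f (circleMap c R θ)) (Icc 0 (2 * π)) :=
    hf.comp (continuous_circleMap c R).continuousOn hmaps
  obtain ⟨θ, hθ, rfl⟩ : z ∈ circleMap c R '' Ioc 0 (2 * π) := by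
    rwa [image_circleMap_Ioc, abs_of_pos hR]
  have hlt := intervalIntegral.integral_lt_integral_of_continuousOn_of_le_of_exists_lt
    two_pi_pos hcont continuousOn_const (fun t ht ↦ hle _ (hmaps (Ioc_subset_Icc_self ht)))
    ⟨θ, Ioc_subset_Icc_self hθ, lt_of_le_of_ne (hle _ hz) hne⟩
  have : circleAverage f c R < a := by
    rw [circleAverage_def, smul_eq_mul, inv_mul_lt_iff₀ two_pi_pos]
    simpa [mul_comm] using hlt
  linarith

theorem circleAverage_log_norm {y : ℂ} {ρ : ℝ} (hρ : 0 < ρ) (hy : ρ ≤ ‖y‖) :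
    circleAverage (fun z ↦ Real.log ‖z‖) y ρ = Real.log ‖y‖ := by
  have h := circleAverage_log_norm_sub_const_eq_log_radius_add_posLog (a := 0) (c := y) hρ.ne'
  simp only [sub_zero] at h
  have hratio : 1 ≤ |ρ⁻¹ * ‖y‖| := by
    rw [inv_mul_eq_div, abs_div, abs_norm, abs_of_pos hρ, le_div_iff₀ hρ]
    linarith
  rw [h, Real.posLog_eq_log hratio, Real.log_mul (inv_ne_zero hρ.ne') (hρ.trans_le hy).ne',
    Real.log_inv]
  ring

def IsLocallySubmeanAt (f : ℂ → ℝ) (y : ℂ) : Prop :=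
  ∀ᶠ ρ in 𝓝[>] (0 : ℝ), f y ≤ circleAverage f y ρ

theorem eventually_closedBall_subset_nhdsGT {y : ℂ} {U : Set ℂ} (hU : U ∈ 𝓝 y) :
    ∀ᶠ ρ in 𝓝[>] (0 : ℝ), 0 < ρ ∧ closedBall y ρ ⊆ U :=
  (eventually_mem_nhdsWithin).and (nhdsWithin_le_nhds (eventually_closedBall_subset hU))

theorem IsLocallySubmeanAt.sub_const_mul_log_norm {f : ℂ → ℝ} {y : ℂ}
    (hf : IsLocallySubmeanAt f y) (hfc : Continuous f) (hy : y ≠ 0) (ε : ℝ) :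
    IsLocallySubmeanAt (fun z ↦ f z - ε * Real.log ‖z‖) y := by
  filter_upwards [hf, Ioo_mem_nhdsGT (norm_pos_iff.2 hy)] with ρ hρ hρy
  have hlog : CircleIntegrable (fun z ↦ Real.log ‖z‖) y ρ := by
    simpa using circleIntegrable_log_norm_sub_const (a := 0) (c := y) ρ
  have hmul : circleAverage (fun z ↦ ε * Real.log ‖z‖) y ρ = ε * Real.log ‖y‖ := by
    rw [← circleAverage_log_norm hρy.1 hρy.2.le]
    exact circleAverage_fun_smul (a := ε) (f := fun z ↦ Real.log ‖z‖)
  rw [circleAverage_fun_sub (f₂ := fun z ↦ ε * Real.log ‖z‖) hfc.continuousOn.circleIntegrable'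
    (hlog.const_smul (a := ε)), hmul]
  linarith

theorem exists_mem_frontier_isMaxOn_closure {U : Set ℂ} (hU : IsOpen U)
    (hb : Bornology.IsBounded U) (hne : U.Nonempty) {f : ℂ → ℝ} (hf : ContinuousOn f (closure U))
    (hsub : ∀ y ∈ U, IsLocallySubmeanAt f y) : ∃ z ∈ frontier U, IsMaxOn f (closure U) z := by
  have hK : IsCompact (closure U) := hb.isCompact_closure
  obtain ⟨z₀, hz₀K, hz₀⟩ := hK.exists_isMaxOn hne.closure hf
  set S := closure U ∩ f ⁻¹' {f z₀}
  have hS : IsCompact S := hK.of_isClosed_subset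
    (hf.preimage_isClosed_of_isClosed isClosed_closure isClosed_singleton) inter_subset_left
  -- among the maximisers, the one furthest to the right cannot be an interior point
  obtain ⟨z, ⟨hzK, hzS⟩, hzre⟩ := hS.exists_isMaxOn ⟨z₀, hz₀K, rfl⟩ continuous_re.continuousOn
  have hzmax : IsMaxOn f (closure U) z := fun w hw ↦ by
    rw [mem_preimage, mem_singleton_iff] at hzS
    rw [mem_ofPred_eq, hzS]; exact hz₀ hw
  refine ⟨z, ?_, hzmax⟩
  rw [hU.frontier_eq]
  refine ⟨hzK, fun hzU ↦ ?_⟩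
  obtain ⟨ρ, hρavg, hρ, hball⟩ :=
    ((hsub z hzU).and (eventually_closedBall_subset_nhdsGT (hU.mem_nhds hzU))).exists
  have hsph : sphere z ρ ⊆ closure U :=
    sphere_subset_closedBall.trans (hball.trans subset_closure)
  have heq := eqOn_sphere_of_le_circleAverage hρ (hf.mono hsph) (fun w hw ↦ hzmax (hsph hw))
    hρavg
  have hright : z + ρ ∈ sphere z ρ := by simp [abs_of_pos hρ]
  have hmem : z + ρ ∈ S := ⟨hsph hright, by
    rw [mem_preimage, heq hright]; exact hzS⟩
  have := hzre hmem
  simp only [mem_ofPred_eq, add_re, ofReal_re] at this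
  linarith

theorem eq_of_forall_le_of_isLocallySubmeanAt {f : ℂ → ℝ} (hf : Continuous f)
    (hsub : ∀ y, IsLocallySubmeanAt f y) {y₀ : ℂ} (hmax : ∀ z, f z ≤ f y₀) (z : ℂ) :
    f z = f y₀ := by
  have hopen : IsOpen {z | f z = f y₀} := by
    rw [Metric.isOpen_iff]
    intro y hy
    obtain ⟨ε, hε, hεavg⟩ := (nhdsGT_basis (0 : ℝ)).eventually_iff.1 (hsub y)
    refine ⟨ε, hε, fun w hw ↦ ?_⟩
    rcases eq_or_ne w y with rfl | hne
    · exact hy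
    have hρ : 0 < dist w y := dist_pos.2 hne
    have hle : ∀ v ∈ sphere y (dist w y), f v ≤ f y := fun v _ ↦ hy ▸ hmax v
    exact (eqOn_sphere_of_le_circleAverage hρ hf.continuousOn hle
      (hεavg ⟨hρ, hw⟩) (mem_sphere.2 rfl)).trans hy
  have huniv := IsClopen.eq_univ ⟨isClosed_eq hf continuous_const, hopen⟩ ⟨y₀, rfl⟩
  exact (huniv ▸ mem_univ z : z ∈ {z | f z = f y₀})

theorem exists_norm_eq_le_of_mem_annulus {f : ℂ → ℝ} {r R : ℝ}
    (hf : ContinuousOn f {z | r ≤ ‖z‖ ∧ ‖z‖ ≤ R})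
    (hsub : ∀ y, r < ‖y‖ → ‖y‖ < R → IsLocallySubmeanAt f y) {x : ℂ} (hrx : r < ‖x‖)
    (hxR : ‖x‖ < R) : ∃ z, (‖z‖ = r ∨ ‖z‖ = R) ∧ f x ≤ f z := by
  set U : Set ℂ := {z | r < ‖z‖ ∧ ‖z‖ < R}
  have hU : IsOpen U :=
    (isOpen_lt continuous_const continuous_norm).inter (isOpen_lt continuous_norm continuous_const)
  have hclosure : closure U ⊆ {z | r ≤ ‖z‖ ∧ ‖z‖ ≤ R} :=
    closure_minimal (fun z hz ↦ ⟨hz.1.le, hz.2.le⟩)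
      ((isClosed_le continuous_const continuous_norm).inter
        (isClosed_le continuous_norm continuous_const))
  have hbdd : Bornology.IsBounded U :=
    (isBounded_ball (x := (0 : ℂ)) (r := R)).subset fun z hz ↦ mem_ball_zero_iff.2 hz.2
  obtain ⟨z, hzfr, hzmax⟩ := exists_mem_frontier_isMaxOn_closure hU hbdd ⟨x, hrx, hxR⟩
    (hf.mono hclosure) fun y hy ↦ hsub y hy.1 hy.2
  rw [hU.frontier_eq] at hzfr
  have hz := hclosure hzfr.1
  refine ⟨z, ?_, hzmax (subset_closure ⟨hrx, hxR⟩)⟩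
  by_contra! h
  exact hzfr.2 ⟨lt_of_le_of_ne hz.1 (Ne.symm h.1), lt_of_le_of_ne hz.2 h.2⟩

theorem le_add_mul_log_norm_of_isLocallySubmeanAt {f : ℂ → ℝ} {M A : ℝ} (hf : Continuous f)
    (hM : ∀ z, f z ≤ M) (hsub : ∀ y, IsLocallySubmeanAt f y)
    (hA : ∀ z ∈ sphere (0 : ℂ) 1, f z ≤ A) {x : ℂ} (hx : 1 < ‖x‖) {ε : ℝ} (hε : 0 < ε) :
    f x ≤ A + ε * Real.log ‖x‖ := by
  set R := max (‖x‖ + 1) (Real.exp ((M - A) / ε))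
  have hR : M - ε * Real.log R ≤ A := by
    have : (M - A) / ε ≤ Real.log R :=
      (Real.le_log_iff_exp_le (by positivity)).2 (le_max_right _ _)
    rw [div_le_iff₀ hε] at this
    linarith
  have hlog : ContinuousOn (fun z : ℂ ↦ Real.log ‖z‖) {z | 1 ≤ ‖z‖ ∧ ‖z‖ ≤ R} :=
    continuous_norm.continuousOn.log fun z hz ↦ by linarith [hz.1]
  obtain ⟨z, hz | hz, hxz⟩ := exists_norm_eq_le_of_mem_annulus
    (f := fun z ↦ f z - ε * Real.log ‖z‖) (hf.continuousOn.sub (continuousOn_const.mul hlog))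
    (fun y hy _ ↦ (hsub y).sub_const_mul_log_norm hf (norm_pos_iff.1 (one_pos.trans hy)) ε) hx
    (by linarith [le_max_left (‖x‖ + 1) (Real.exp ((M - A) / ε))])
  · rw [hz, Real.log_one] at hxz
    linarith [hA z (mem_sphere_zero_iff_norm.2 hz)]
  · rw [hz] at hxz
    linarith [hM z]

theorem eq_of_bddAbove_of_isLocallySubmeanAt {f : ℂ → ℝ} (hf : Continuous f)
    (hbdd : BddAbove (range f)) (hsub : ∀ y, IsLocallySubmeanAt f y) (z w : ℂ) :
    f z = f w := by
  obtain ⟨M, hM⟩ := hbdd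
  obtain ⟨y₀, -, hy₀⟩ := (isCompact_closedBall (0 : ℂ) 1).exists_isMaxOn
    (nonempty_closedBall.2 zero_le_one) hf.continuousOn
  have hglobal : ∀ x, f x ≤ f y₀ := by
    intro x
    rcases le_or_gt ‖x‖ 1 with hx | hx
    · exact hy₀ (mem_closedBall_zero_iff.2 hx)
    have hlog : 0 < Real.log ‖x‖ := Real.log_pos hx
    refine le_of_forall_pos_le_add fun ε hε ↦ ?_
    have := le_add_mul_log_norm_of_isLocallySubmeanAt hf (fun z ↦ hM (mem_range_self z)) hsub
      (fun z hz ↦ hy₀ (sphere_subset_closedBall hz)) hx (div_pos hε hlog)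
    rwa [div_mul_cancel₀ _ hlog.ne'] at this
  rw [eq_of_forall_le_of_isLocallySubmeanAt hf hsub hglobal z,
    eq_of_forall_le_of_isLocallySubmeanAt hf hsub hglobal w]

theorem isLocallySubmeanAt_max_zero {f : ℂ → ℝ} {y : ℂ} (hf : Continuous f)
    (h : 0 < f y → IsLocallySubmeanAt f y) : IsLocallySubmeanAt (fun z ↦ max (f z) 0) y := by
  rcases lt_or_ge 0 (f y) with hpos | hnonpos
  · filter_upwards [h hpos] with ρ hρ
    rw [max_eq_left hpos.le]
    exact hρ.trans (circleAverage_mono hf.continuousOn.circleIntegrable'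
      (hf.max continuous_const).continuousOn.circleIntegrable' fun z _ ↦ le_max_left _ _)
  · refine Eventually.of_forall fun ρ ↦ ?_
    change max (f y) 0 ≤ _
    rw [max_eq_right hnonpos]
    exact circleAverage_nonneg_of_nonneg fun z _ ↦ le_max_right _ _

theorem closedBall_subset_ball_zero (y : ℂ) (ρ : ℝ) : closedBall y ρ ⊆ ball 0 (‖y‖ + ρ + 1) :=
  closedBall_subset_ball' (by rw [dist_zero_right]; linarith)

namespace IsTOSR2

variable {u u₁ u₂ : ℂ → ℝ}

theorem continuous (hu : IsTOSR2 u) : Continuous u :=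
  continuous_iff_continuousAt.2 fun z ↦ (hu (‖z‖ + 1) (by positivity)).1.continuousAt
    (isOpen_ball.mem_nhds (mem_ball_zero_iff.2 (lt_add_one _)))

theorem nonneg (hu : IsTOSR2 u) {z : ℂ} (hz : z.im = 0) : 0 ≤ u z :=
  (hu (‖z‖ + 1) (by positivity)).2.2.2.1 z (mem_ball_zero_iff.2 (lt_add_one _)) hz

theorem circleAverage_le (hu : IsTOSR2 u) (y : ℂ) {ρ : ℝ} (hρ : 0 < ρ) :
    circleAverage u y ρ ≤ u y := by
  rw [← circAvg_eq_circleAverage]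
  exact (hu (‖y‖ + ρ + 1) (by positivity)).2.2.1 y ρ hρ (closedBall_subset_ball_zero y ρ)

theorem circleAverage_eq (hu : IsTOSR2 u) {y : ℂ} {ρ : ℝ} (hρ : 0 < ρ)
    (hcontact : ∀ z ∈ closedBall y ρ, z.im = 0 → u z ≠ 0) : circleAverage u y ρ = u y := by
  rw [← circAvg_eq_circleAverage]
  exact (hu (‖y‖ + ρ + 1) (by positivity)).2.2.2.2.2 y ρ hρ fun z hz ↦
    ⟨closedBall_subset_ball_zero y ρ hz, fun h ↦ hcontact z hz h.1 h.2⟩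

theorem isLocallySubmeanAt_sub (h₁ : IsTOSR2 u₁) (h₂ : IsTOSR2 u₂) {y : ℂ} (hy : u₂ y < u₁ y) :
    IsLocallySubmeanAt (fun z ↦ u₁ z - u₂ z) y := by
  have hclosed : IsClosed {z : ℂ | z.im = 0 ∧ u₁ z = 0} :=
    (isClosed_eq continuous_im continuous_const).inter
      (isClosed_eq h₁.continuous continuous_const)
  have hy : y ∉ {z : ℂ | z.im = 0 ∧ u₁ z = 0} := fun ⟨him, h0⟩ ↦ by
    linarith [h₂.nonneg him]
  filter_upwards [eventually_closedBall_subset_nhdsGT (hclosed.isOpen_compl.mem_nhds hy)]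
    with ρ ⟨hρ, hball⟩
  rw [circleAverage_fun_sub h₁.continuous.continuousOn.circleIntegrable'
    h₂.continuous.continuousOn.circleIntegrable',
    h₁.circleAverage_eq hρ fun z hz him h0 ↦ hball hz ⟨him, h0⟩]
  linarith [h₂.circleAverage_le y hρ]

end IsTOSR2

theorem us_circleMap_zero (s : ℝ) {ρ : ℝ} (hρ : 0 < ρ) {θ : ℝ} (hθ : θ ∈ Ioc (-π) π) :
    us s (circleMap 0 ρ θ) = ρ ^ s * Real.cos (s * θ) := by
  rw [us, norm_circleMap_zero, abs_of_pos hρ, circleMap_zero, exp_mul_I,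
    arg_mul_cos_add_sin_mul_I hρ hθ]

theorem circleIntegrable_us (s ρ : ℝ) : CircleIntegrable (us s) 0 ρ := by
  have hmeas : Measurable (us s) :=
    (continuous_norm.measurable.pow_const s).mul
      (Real.measurable_cos.comp (measurable_const.mul measurable_arg))
  refine IntervalIntegrable.mono_fun' (g := fun _ ↦ |ρ| ^ s) intervalIntegrable_const
    (hmeas.comp (continuous_circleMap 0 ρ).measurable).aestronglyMeasurable
    (Eventually.of_forall fun θ ↦ ?_)
  simp only [us, norm_circleMap_zero, Real.norm_eq_abs, abs_mul,
    abs_of_nonneg (Real.rpow_nonneg (abs_nonneg ρ) s)]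
  exact mul_le_of_le_one_right (by positivity) (Real.abs_cos_le_one _)

theorem integral_cos_mul_neg_pi_pi {s : ℝ} (hs : s ≠ 0) :
    ∫ θ in -π..π, Real.cos (s * θ) = 2 * Real.sin (s * π) / s := by
  rw [intervalIntegral.integral_comp_mul_left (fun θ ↦ Real.cos θ) hs, integral_cos, smul_eq_mul,
    mul_neg, Real.sin_neg]
  field_simp
  ring

theorem circleAverage_us {s : ℝ} (hs : s ≠ 0) {ρ : ℝ} (hρ : 0 < ρ) :
    circleAverage (us s) 0 ρ = ρ ^ s * Real.sin (s * π) / (π * s) := by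
  have hper : Function.Periodic (fun θ ↦ us s (circleMap 0 ρ θ)) (2 * π) :=
    (periodic_circleMap 0 ρ).comp (us s)
  have hshift := hper.intervalIntegral_add_eq 0 (-π)
  rw [zero_add, show -π + 2 * π = π by ring] at hshift
  have hcongr : ∫ θ in -π..π, us s (circleMap 0 ρ θ) = ∫ θ in -π..π, ρ ^ s * Real.cos (s * θ) := by
    refine intervalIntegral.integral_congr_ae (Eventually.of_forall fun θ hθ ↦ ?_)
    rw [uIoc_of_le (by linarith [pi_pos])] at hθ
    exact us_circleMap_zero s hρ hθ
  rw [circleAverage_def, hshift, hcongr, intervalIntegral.integral_const_mul,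
    integral_cos_mul_neg_pi_pi hs, smul_eq_mul]
  field_simp

theorem circleIntegrable_const_mul_us (b s ρ : ℝ) :
    CircleIntegrable (fun z ↦ b * us s z) 0 ρ :=
  (circleIntegrable_us s ρ).const_smul (a := b)

theorem circleIntegrable_pData (k : ℕ) (a : ℕ → ℝ) (ρ : ℝ) : CircleIntegrable (pData k a) 0 ρ :=
  (circleIntegrable_us _ ρ).fun_add
    (CircleIntegrable.fun_sum _ fun l _ ↦ circleIntegrable_const_mul_us (a l) _ ρ)

theorem circleAverage_pData (k : ℕ) (a : ℕ → ℝ) (ρ : ℝ) :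
    circleAverage (pData k a) 0 ρ = circleAverage (us (2 * k - 1 / 2)) 0 ρ +
      ∑ l ∈ Finset.Icc 1 (2 * k - 1), a l * circleAverage (us (2 * k - 1 / 2 - l)) 0 ρ := by
  unfold pData
  rw [circleAverage_fun_add (circleIntegrable_us _ ρ)
    (CircleIntegrable.fun_sum (f := fun l z ↦ a l * us (2 * k - 1 / 2 - l) z) _
      fun l _ ↦ circleIntegrable_const_mul_us (a l) _ ρ),
    circleAverage_fun_sum fun l _ ↦ circleIntegrable_const_mul_us (a l) _ ρ]
  congr 1
  exact Finset.sum_congr rfl fun l _ ↦ circleAverage_fun_smul (a := a l) (f := us _)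

theorem mul_circleAverage_us_le {b s ρ : ℝ} (hb : |b| ≤ 1) (hs : 1 / 2 ≤ s) (hρ : 0 < ρ) :
    b * circleAverage (us s) 0 ρ ≤ 2 * ρ ^ s / π := by
  have hρs : 0 ≤ ρ ^ s := Real.rpow_nonneg hρ.le s
  rw [circleAverage_us (by linarith) hρ]
  calc b * (ρ ^ s * Real.sin (s * π) / (π * s))
      ≤ |b| * (ρ ^ s * |Real.sin (s * π)| / (π * s)) := by
        refine (le_abs_self _).trans_eq ?_
        rw [abs_mul, abs_div, abs_mul, abs_of_nonneg hρs, abs_of_pos (mul_pos pi_pos (by linarith))]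
    _ ≤ 1 * (ρ ^ s * 1 / (π * (1 / 2))) := by
        gcongr
        exact Real.abs_sin_le_one _
    _ = 2 * ρ ^ s / π := by ring

theorem circleAverage_pData_le {k : ℕ} (hk : 1 ≤ k) {a : ℕ → ℝ}
    (ha : ∀ l ∈ Finset.Icc 1 (2 * k - 1), |a l| ≤ 1) {ρ : ℝ} (hρ : 1 ≤ ρ) :
    circleAverage (pData k a) 0 ρ ≤
      ρ ^ ((2 * k - 1 / 2 : ℝ) - 1) * (4 * k - ρ / (2 * k - 1 / 2)) / π := by
  set s₀ : ℝ := 2 * k - 1 / 2 with hs₀def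
  have hk' : (1 : ℝ) ≤ k := by exact_mod_cast hk
  have hs₀ : 0 < s₀ := by rw [hs₀def]; linarith
  have hρ₀ : 0 < ρ := one_pos.trans_le hρ
  have hsin : Real.sin (s₀ * π) = -1 := by
    rw [show s₀ * π = k * (2 * π) - π / 2 by ring, Real.sin_nat_mul_two_pi_sub, Real.sin_pi_div_two]
  have hterm : ∀ l ∈ Finset.Icc 1 (2 * k - 1),
      a l * circleAverage (us (s₀ - l)) 0 ρ ≤ 2 * ρ ^ (s₀ - 1) / π := by
    intro l hl
    obtain ⟨hl₁, hl₂⟩ := Finset.mem_Icc.1 hl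
    have hl₁' : (1 : ℝ) ≤ l := by exact_mod_cast hl₁
    have hl₂' : (l : ℝ) ≤ 2 * k - 1 := by
      rw [le_sub_iff_add_le]; exact_mod_cast Nat.le_sub_one_iff_lt (by omega) |>.1 hl₂
    refine (mul_circleAverage_us_le (ha l hl) (by rw [hs₀def]; linarith) hρ₀).trans ?_
    gcongr
  have hsum := Finset.sum_le_card_nsmul _ _ _ hterm
  have hcard : ((Finset.Icc 1 (2 * k - 1)).card : ℝ) ≤ 2 * k := by
    rw [Nat.card_Icc]; norm_cast; omega
  rw [nsmul_eq_mul] at hsum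
  have hsplit : ρ ^ (s₀ - 1) * (4 * k - ρ / s₀) / π
      = 2 * k * (2 * ρ ^ (s₀ - 1) / π) + ρ ^ s₀ * -1 / (π * s₀) := by
    rw [Real.rpow_sub_one hρ₀.ne']
    field_simp
    ring
  rw [circleAverage_pData, circleAverage_us hs₀.ne' hρ₀, hsin, hsplit]
  have hpos : 0 ≤ 2 * ρ ^ (s₀ - 1) / π := by positivity
  nlinarith

theorem tendsto_circleAverage_pData_atBot {k : ℕ} (hk : 1 ≤ k) {a : ℕ → ℝ}
    (ha : ∀ l ∈ Finset.Icc 1 (2 * k - 1), |a l| ≤ 1) :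
    Tendsto (fun ρ ↦ circleAverage (pData k a) 0 ρ) atTop atBot := by
  set s₀ : ℝ := 2 * k - 1 / 2 with hs₀def
  have hk' : (1 : ℝ) ≤ k := by exact_mod_cast hk
  have hs₀ : 0 < s₀ := by rw [hs₀def]; linarith
  rw [tendsto_atBot]
  intro X
  filter_upwards [eventually_ge_atTop (max 1 (s₀ * (4 * k + π * |X|)))] with ρ hρ
  have hρ₁ : 1 ≤ ρ := le_of_max_le_left hρ
  have hbracket : 4 * k - ρ / s₀ ≤ -(π * |X|) := by
    have := le_of_max_le_right hρ
    rw [← le_div_iff₀' hs₀] at this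
    linarith
  have hpow : 1 ≤ ρ ^ (s₀ - 1) := Real.one_le_rpow hρ₁ (by rw [hs₀def]; linarith)
  calc circleAverage (pData k a) 0 ρ ≤ ρ ^ (s₀ - 1) * (4 * k - ρ / s₀) / π :=
        circleAverage_pData_le hk ha hρ₁
    _ ≤ -(π * |X|) / π := by
        have hneg : 4 * k - ρ / s₀ ≤ 0 := hbracket.trans (neg_nonpos.2 (by positivity))
        gcongr
        nlinarith [mul_le_mul_of_nonpos_right hpow hneg]
    _ ≤ X := by
        rw [neg_div, mul_div_cancel_left₀ _ pi_ne_zero]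
        exact neg_abs_le X

theorem exists_contact_of_solWithData {k : ℕ} (hk : 1 ≤ k) {a : ℕ → ℝ}
    (ha : ∀ l ∈ Finset.Icc 1 (2 * k - 1), |a l| ≤ 1) {u : ℂ → ℝ}
    (hu : SolWithData u (pData k a)) : ∃ z : ℂ, z.im = 0 ∧ u z = 0 := by
  by_contra! hcontact
  obtain ⟨htos, C, hC⟩ := hu
  have hlow : ∀ ρ > 0, u 0 - C ≤ circleAverage (pData k a) 0 ρ := fun ρ hρ ↦
    calc u 0 - C = circleAverage (fun z ↦ u z - C) 0 ρ := by
          rw [circleAverage_fun_sub htos.continuous.continuousOn.circleIntegrable'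
            (circleIntegrable_const C 0 ρ), circleAverage_const,
            htos.circleAverage_eq hρ fun z _ ↦ hcontact z]
      _ ≤ circleAverage (pData k a) 0 ρ :=
          circleAverage_mono (htos.continuous.sub continuous_const).continuousOn.circleIntegrable'
            (circleIntegrable_pData k a ρ) fun z _ ↦ by linarith [(abs_le.1 (hC z)).2]
  obtain ⟨ρ, hρlow, hρ⟩ := (((tendsto_circleAverage_pData_atBot hk ha).eventually
    (eventually_lt_atBot (u 0 - C))).and (eventually_gt_atTop 0)).exists
  linarith [hlow ρ hρ]

theorem le_of_solWithData {k : ℕ} (hk : 1 ≤ k) {a : ℕ → ℝ}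
    (ha : ∀ l ∈ Finset.Icc 1 (2 * k - 1), |a l| ≤ 1) {u₁ u₂ : ℂ → ℝ}
    (h₁ : SolWithData u₁ (pData k a)) (h₂ : SolWithData u₂ (pData k a)) (z : ℂ) :
    u₁ z ≤ u₂ z := by
  obtain ⟨ht₁, C₁, hC₁⟩ := h₁
  obtain ⟨ht₂, C₂, hC₂⟩ := h₂
  set m : ℂ → ℝ := fun z ↦ max (u₁ z - u₂ z) 0
  have hbdd : BddAbove (range m) := ⟨C₁ + C₂, by
    rintro _ ⟨w, rfl⟩
    refine max_le ?_ (by linarith [(abs_nonneg _).trans (hC₁ w), (abs_nonneg _).trans (hC₂ w)])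
    linarith [(abs_le.1 (hC₁ w)).2, (abs_le.1 (hC₂ w)).1]⟩
  have hsub : Continuous fun z ↦ u₁ z - u₂ z := ht₁.continuous.sub ht₂.continuous
  have hconst : ∀ z w, m z = m w := eq_of_bddAbove_of_isLocallySubmeanAt
    (hsub.max continuous_const) hbdd fun y ↦ isLocallySubmeanAt_max_zero hsub fun hy ↦
      ht₁.isLocallySubmeanAt_sub ht₂ (sub_pos.1 hy)
  by_contra! hlt
  obtain ⟨w, hw, hw₀⟩ := exists_contact_of_solWithData hk ha ⟨ht₁, C₁, hC₁⟩
  have hmz : m z = u₁ z - u₂ z := max_eq_left (by linarith)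
  have hmw : m w = 0 := max_eq_right (by linarith [ht₂.nonneg hw])
  linarith [hconst z w]

/-- Uniqueness: two solutions with the same data `p` at infinity coincide. -/
theorem statement1 (k : ℕ) (hk : 1 ≤ k) (a : ℕ → ℝ)
    (ha : ∀ l ∈ Finset.Icc 1 (2*k-1), |a l| ≤ 1)
    (u1 u2 : ℂ → ℝ)
    (h1 : SolWithData u1 (pData k a)) (h2 : SolWithData u2 (pData k a)) :
    u1 = u2 := by
  funext z
  exact le_antisymm (le_of_solWithData hk ha h1 h2 z) (le_of_solWithData hk ha h2 h1 z)
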